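/- If a row vector of the PDD matrix consists of the increasing sequence of distances d₁(p) ≤ … ≤ d_k(p) from p to its k nearest neighbours in a set S, and every point of S as well as p is perturbed by at most ε in Euclidean distance, then each d_i changes by at most 2ε: the i-th smallest distance from the perturbed point to the perturbed set differs from d_i(p) by at most 2ε. -/

import Mathlib

/-- The `i`-th smallest (0-indexed) distance from `p` to the points of the finite set `S`. -/
noncomputable def kthDist {n : ℕ} (S : Finset (EuclideanSpace ℝ (Fin n)))
    (p : EuclideanSpace ℝ (Fin n)) (i : ℕ) : ℝ :=
  (Multiset.sort (S.val.map fun q => dist q p) (· ≤ ·)).getD i 0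

/-!
The `i`-th order statistic of a finite family of reals is `1`-Lipschitz for the sup distance
between families indexed by the same set: it is `≤ y` iff at least `i + 1` members are `≤ y`,
and moving every member by at most `δ` keeps each of these `≤ y + δ`. Matching `q ∈ S` with
`φ q ∈ S'`, the triangle inequality moves each distance `dist q p` by at most `2ε`.
-/

theorem List.SortedLE.getD_le_iff_lt_countP {α : Type*} [LinearOrder α] {L : List α}
    (hL : L.SortedLE) {i : ℕ} (hi : i < L.length) (d x : α) :
    L.getD i d ≤ x ↔ i < L.countP (· ≤ x) := by
  rw [List.getD_eq_getElem L d hi]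
  constructor
  · intro hx
    have hprefix : (L.take (i + 1)).countP (· ≤ x) = i + 1 := by
      rw [List.countP_eq_length.mpr, List.length_take_of_le hi]
      intro a ha
      obtain ⟨j, hj, rfl⟩ := List.mem_take_iff_getElem.mp ha
      simpa using (hL.getElem_le_getElem_of_le (by omega)).trans hx
    have := (List.take_sublist (i + 1) L).countP_le (p := (· ≤ x))
    omega
  · intro hcount
    by_contra! hx
    have hsuffix : (L.drop i).countP (· ≤ x) = 0 := by
      rw [List.countP_eq_zero]
      intro a ha
      obtain ⟨j, hj, rfl⟩ := List.mem_drop_iff_getElem.mp ha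
      simpa using hx.trans_le (hL.getElem_le_getElem_of_le (Nat.le_add_right i j))
    have hprefix : (L.take i).countP (· ≤ x) ≤ i :=
      List.countP_le_length.trans (List.length_take_le _ _)
    rw [← List.take_append_drop i L, List.countP_append] at hcount
    omega

theorem Multiset.getD_sort_le_iff_lt_countP {α : Type*} [LinearOrder α] {M : Multiset α}
    {i : ℕ} (hi : i < card M) (d x : α) :
    (M.sort (· ≤ ·)).getD i d ≤ x ↔ i < M.countP (· ≤ x) := by
  rw [(M.pairwise_sort _).sortedLE.getD_le_iff_lt_countP (by rwa [M.length_sort]),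
    ← Multiset.coe_countP, Multiset.sort_eq]

theorem Multiset.getD_sort_map_le_add {ι : Type*} (s : Multiset ι) {f g : ι → ℝ} {δ : ℝ}
    (hfg : ∀ j, g j ≤ f j + δ) {i : ℕ} (hi : i < card s) :
    ((s.map g).sort (· ≤ ·)).getD i 0 ≤ ((s.map f).sort (· ≤ ·)).getD i 0 + δ := by
  set y := ((s.map f).sort (· ≤ ·)).getD i 0
  have hf : i < (s.map f).countP (· ≤ y) :=
    (getD_sort_le_iff_lt_countP (by rwa [card_map]) 0 y).mp le_rfl
  rw [getD_sort_le_iff_lt_countP (by rwa [card_map])]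
  refine hf.trans_le ?_
  rw [countP_map, countP_map]
  exact card_le_card (monotone_filter_right _ fun j hj => by linarith [hfg j])

theorem Multiset.dist_getD_sort_map_le {ι : Type*} (s : Multiset ι) {f g : ι → ℝ} {δ : ℝ}
    (hfg : ∀ j, dist (g j) (f j) ≤ δ) {i : ℕ} (hi : i < card s) :
    dist (((s.map g).sort (· ≤ ·)).getD i 0) (((s.map f).sort (· ≤ ·)).getD i 0) ≤ δ := by
  have hclose j : g j ≤ f j + δ ∧ f j ≤ g j + δ := by
    have := abs_sub_le_iff.mp ((Real.dist_eq _ _).symm.trans_le (hfg j))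
    constructor <;> linarith [this.1, this.2]
  rw [Real.dist_eq, abs_sub_le_iff]
  constructor
  · linarith [s.getD_sort_map_le_add (fun j => (hclose j).1) hi]
  · linarith [s.getD_sort_map_le_add (fun j => (hclose j).2) hi]

theorem Finset.val_map_eq_attach_map_equiv {α β γ : Type*} {S : Finset α} {S' : Finset β}
    (φ : S ≃ S') (g : β → γ) : S'.val.map g = S.attach.val.map fun q => g (φ q) := by
  rw [← S'.val.attach_map_val, Multiset.map_map, ← Finset.attach_val, ← Finset.univ_eq_attach,
    ← Multiset.map_univ_val_equiv φ, Multiset.map_map, Finset.univ_eq_attach]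
  rfl

theorem kthDist_stability_general {n : ℕ} (S S' : Finset (EuclideanSpace ℝ (Fin n)))
    (ε : ℝ)
    (φ : {x // x ∈ S} ≃ {x // x ∈ S'})
    (hφ : ∀ q : {x // x ∈ S}, dist ((φ q : EuclideanSpace ℝ (Fin n))) (q : EuclideanSpace ℝ (Fin n)) ≤ ε)
    (p p' : EuclideanSpace ℝ (Fin n)) (hp : dist p' p ≤ ε)
    (k : ℕ) (hk : k ≤ S.card) (i : ℕ) (hi : i < k) :
    |kthDist S' p' i - kthDist S p i| ≤ 2 * ε := by
  have hclose (q : S) : dist (dist (φ q).1 p') (dist q.1 p) ≤ 2 * ε :=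
    (dist_dist_dist_le _ _ _ _).trans (by linarith [hφ q])
  rw [← Real.dist_eq, kthDist, kthDist, Finset.val_map_eq_attach_map_equiv φ,
    Finset.val_map_eq_attach_map_equiv (Equiv.refl S)]
  exact S.attach.val.dist_getD_sort_map_le hclose (hi.trans_le (hk.trans_eq S.card_attach.symm))

theorem kthDist_stability {n : ℕ} (S S' : Finset (EuclideanSpace ℝ (Fin n)))
    (ε : ℝ) (hε : 0 ≤ ε)
    (φ : {x // x ∈ S} ≃ {x // x ∈ S'})
    (hφ : ∀ q : {x // x ∈ S}, dist ((φ q : EuclideanSpace ℝ (Fin n))) (q : EuclideanSpace ℝ (Fin n)) ≤ ε)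
    (p p' : EuclideanSpace ℝ (Fin n)) (hp : dist p' p ≤ ε)
    (k : ℕ) (hk : k ≤ S.card) (i : ℕ) (hi : i < k) :
    |kthDist S' p' i - kthDist S p i| ≤ 2 * ε :=
  kthDist_stability_general S S' ε φ hφ p p' hp k hk i hi
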